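/- arXiv:1609.00427 — 4 statements merged into one kernel-verified Lean document; each statement's English description precedes it below -/
import Mathlib

section
/- Let B > 0 and α ∈ (0,1], and let f* ≥ 0. Suppose g₀ = 0 and a sequence g₀ ≤ g₁ ≤ ... ≤ g_B of nonnegative reals satisfies α·((f* - g_i/α) - (f* - g_{i+1}/α)) ≥ (1/B)·(f* - g_i/α) for all 0 ≤ i < B, with 1/(αB) ≤ 1. Then g_B ≥ α·(1 - e^{-1/α})·f*. -/
/-
With Δᵢ = f* - gᵢ/α the recurrence says Δᵢ₊₁ ≤ (1 - 1/(αB)) Δᵢ, so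
Δ_B ≤ (1 - 1/(αB))^B Δ₀ ≤ e^{-1/α} f*, using Δ₀ = f* and (1 - t/n)^n ≤ e^{-t} for t ≤ n.
Unfolding Δ_B gives the bound on g_B.
-/

theorem le_one_sub_div_mul_of_mul_sub_ge {α n a b : ℝ} (hα : 0 < α)
    (h : α * (a - b) ≥ (1 / n) * a) : b ≤ (1 - (1 / α) / n) * a := by
  have h' : (1 - (1 / α) / n) * a = a - (1 / n) * a / α := by field_simp
  rw [h', le_sub_comm, div_le_iff₀' hα]
  linarith

theorem stmt_1_general (B : ℕ) (hB : 0 < B) (α : ℝ) (hα0 : 0 < α)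
    (fstar : ℝ) (hf : 0 ≤ fstar) (g : ℕ → ℝ)
    (hg0 : g 0 = 0)
    (hrec : ∀ i < B, α * ((fstar - g i / α) - (fstar - g (i + 1) / α))
      ≥ (1 / B) * (fstar - g i / α))
    (hx : 1 / (α * B) ≤ 1) :
    g B ≥ α * (1 - Real.exp (-1 / α)) * fstar := by
  have hBpos : (0 : ℝ) < B := by exact_mod_cast hB
  have ht : 1 / α ≤ B := by
    rwa [div_le_one (by positivity), ← div_le_iff₀' hα0] at hx
  have hc : 0 ≤ 1 - (1 / α) / B := by rwa [sub_nonneg, div_le_one hBpos]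
  have hdecay := le_geom (u := fun i => fstar - g i / α) hc B
    fun i hi => le_one_sub_div_mul_of_mul_sub_ge hα0 (hrec i hi)
  have hexp : (1 - (1 / α) / B) ^ B ≤ Real.exp (-1 / α) := by
    rw [neg_div]; exact Real.one_sub_div_pow_le_exp_neg ht
  simp only [hg0, zero_div, sub_zero] at hdecay
  have hgap : fstar - g B / α ≤ Real.exp (-1 / α) * fstar :=
    hdecay.trans (mul_le_mul_of_nonneg_right hexp hf)
  rw [ge_iff_le, mul_assoc, ← le_div_iff₀' hα0]
  linarith

theorem stmt_1 (B : ℕ) (hB : 0 < B) (α : ℝ) (hα0 : 0 < α) (hα1 : α ≤ 1)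
    (fstar : ℝ) (hf : 0 ≤ fstar) (g : ℕ → ℝ)
    (hg0 : g 0 = 0) (hnn : ∀ i ≤ B, 0 ≤ g i)
    (hmono : ∀ i, i < B → g i ≤ g (i + 1))
    (hrec : ∀ i < B, α * ((fstar - g i / α) - (fstar - g (i + 1) / α))
      ≥ (1 / B) * (fstar - g i / α))
    (hx : 1 / (α * B) ≤ 1) :
    g B ≥ α * (1 - Real.exp (-1 / α)) * fstar :=
  stmt_1_general B hB α hα0 fstar hf g hg0 hrec hx
end

section
/- Let B > 0, α ∈ (0,1], f* ≥ 0, and let c₁, ..., c_l be positive reals with Σ_{i=1}^l c_i ≥ B - C̄ for some C̄ ∈ [0, B], and c_i/(αB) ≤ 1 for all i. Suppose g₀ = 0 and g₀ ≤ g₁ ≤ ... ≤ g_l satisfy α·((f* - g_{i-1}/α) - (f* - g_i/α)) ≥ (c_i/B)·(f* - g_{i-1}/α) for all 1 ≤ i ≤ l. Then g_l ≥ α·(1 - e^{-(1/α)·(B - C̄)/B})·f*. -/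
/-! Write `h i = f* - gᵢ / α` and `xᵢ = cᵢ / (α B)`. The recurrence says `hᵢ ≤ (1 - xᵢ) hᵢ₋₁`,
and `h₀ = f*`, so `h_l ≤ f* ∏ (1 - xᵢ) ≤ f* exp (-∑ xᵢ) ≤ f* exp (-(B - C̄) / (α B))`
by `1 - x ≤ exp (-x)` and the budget bound `∑ cᵢ ≥ B - C̄`. Solving for `g_l = α (f* - h_l)`
gives the claim. -/

open Finset

lemma le_mul_prod_Icc_of_le_mul {R : Type*} [CommSemiring R] [PartialOrder R] [IsOrderedRing R]
    {h a : ℕ → R} {n : ℕ} (ha : ∀ i, 1 ≤ i → i ≤ n → 0 ≤ a i)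
    (hstep : ∀ i, 1 ≤ i → i ≤ n → h i ≤ a i * h (i - 1)) :
    h n ≤ h 0 * ∏ i ∈ Icc 1 n, a i := by
  induction n with
  | zero => simp
  | succ n ih =>
    have ih := ih (fun i hi hin ↦ ha i hi (by omega)) (fun i hi hin ↦ hstep i hi (by omega))
    calc h (n + 1) ≤ a (n + 1) * h n := hstep (n + 1) (by omega) le_rfl
      _ ≤ a (n + 1) * (h 0 * ∏ i ∈ Icc 1 n, a i) :=
        mul_le_mul_of_nonneg_left ih (ha (n + 1) (by omega) le_rfl)
      _ = h 0 * ∏ i ∈ Icc 1 (n + 1), a i := by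
        rw [prod_Icc_succ_top (by omega)]; ring

lemma Real.prod_one_sub_le_exp_neg_sum {ι : Type*} {s : Finset ι} {x : ι → ℝ}
    (hx : ∀ i ∈ s, x i ≤ 1) : ∏ i ∈ s, (1 - x i) ≤ Real.exp (-∑ i ∈ s, x i) := by
  rw [← sum_neg_distrib, Real.exp_sum]
  exact prod_le_prod (fun i hi ↦ sub_nonneg.2 (hx i hi)) fun i _ ↦ Real.one_sub_le_exp_neg _

lemma sub_div_le_one_sub_div_mul {α B c u v f : ℝ} (hα : 0 < α)
    (hdec : α * ((f - u / α) - (f - v / α)) ≥ (c / B) * (f - u / α)) :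
    f - v / α ≤ (1 - c / (α * B)) * (f - u / α) := by
  have key : α * (f - v / α) ≤ α * ((1 - c / (α * B)) * (f - u / α)) := by
    have : α * ((1 - c / (α * B)) * (f - u / α)) = α * (f - u / α) - c / B * (f - u / α) := by
      field_simp
    linarith
  exact le_of_mul_le_mul_left key hα

theorem stmt_6_general (l : ℕ) (B : ℝ) (hB : 0 < B) (α : ℝ) (hα0 : 0 < α)
    (fstar : ℝ) (hf : 0 ≤ fstar)
    (c : ℕ → ℝ)
    (Cbar : ℝ)
    (hsum : (∑ i ∈ Finset.Icc 1 l, c i) ≥ B - Cbar)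
    (hx : ∀ i, 1 ≤ i → i ≤ l → c i / (α * B) ≤ 1)
    (g : ℕ → ℝ) (hg0 : g 0 = 0)
    (hrec : ∀ i, 1 ≤ i → i ≤ l →
      α * ((fstar - g (i - 1) / α) - (fstar - g i / α)) ≥ (c i / B) * (fstar - g (i - 1) / α)) :
    g l ≥ α * (1 - Real.exp (-(1 / α) * ((B - Cbar) / B))) * fstar := by
  have hprod : fstar - g l / α ≤ fstar * ∏ i ∈ Icc 1 l, (1 - c i / (α * B)) := by
    simpa [hg0] using le_mul_prod_Icc_of_le_mul (h := fun i ↦ fstar - g i / α)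
      (fun i hi hil ↦ sub_nonneg.2 (hx i hi hil))
      (fun i hi hil ↦ sub_div_le_one_sub_div_mul hα0 (hrec i hi hil))
  have hexp : ∏ i ∈ Icc 1 l, (1 - c i / (α * B)) ≤ Real.exp (-(1 / α) * ((B - Cbar) / B)) := by
    refine (Real.prod_one_sub_le_exp_neg_sum fun i hi ↦ ?_).trans (Real.exp_le_exp.2 ?_)
    · rw [mem_Icc] at hi
      exact hx i hi.1 hi.2
    · have : (B - Cbar) / (α * B) ≤ ∑ i ∈ Icc 1 l, c i / (α * B) := by
        rw [← sum_div]; exact div_le_div_of_nonneg_right hsum (by positivity)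
      have hrw : -(1 / α) * ((B - Cbar) / B) = -((B - Cbar) / (α * B)) := by field_simp
      linarith
  have hgl : fstar - g l / α ≤ fstar * Real.exp (-(1 / α) * ((B - Cbar) / B)) :=
    hprod.trans (mul_le_mul_of_nonneg_left hexp hf)
  have : g l = α * (g l / α) := by field_simp
  nlinarith

theorem stmt_6 (l : ℕ) (B : ℝ) (hB : 0 < B) (α : ℝ) (hα0 : 0 < α) (hα1 : α ≤ 1)
    (fstar : ℝ) (hf : 0 ≤ fstar)
    (c : ℕ → ℝ) (hc : ∀ i, 1 ≤ i → i ≤ l → 0 < c i)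
    (Cbar : ℝ) (hC0 : 0 ≤ Cbar) (hCB : Cbar ≤ B)
    (hsum : (∑ i ∈ Finset.Icc 1 l, c i) ≥ B - Cbar)
    (hx : ∀ i, 1 ≤ i → i ≤ l → c i / (α * B) ≤ 1)
    (g : ℕ → ℝ) (hg0 : g 0 = 0) (hnn : ∀ i ≤ l, 0 ≤ g i)
    (hmono : ∀ i, i < l → g i ≤ g (i + 1))
    (hrec : ∀ i, 1 ≤ i → i ≤ l →
      α * ((fstar - g (i - 1) / α) - (fstar - g i / α)) ≥ (c i / B) * (fstar - g (i - 1) / α)) :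
    g l ≥ α * (1 - Real.exp (-(1 / α) * ((B - Cbar) / B))) * fstar :=
  stmt_6_general l B hB α hα0 fstar hf c Cbar hsum hx g hg0 hrec
end

section
/- Let ε ∈ [0,1), α ∈ (0,1], and n ≥ 0. Let Δ : V → ℝ be a nonnegative function on a finite nonempty set V, and let f̃, f : V → ℝ satisfy (1-ε)·(F + Δ(u)) ≤ F̃ + Δ̃(u) ≤ (1+ε)·(F + Δ(u)) for all u ∈ V, where F ≤ n, F̃ are fixed reals and Δ̃ : V → ℝ. If v maximizes Δ̃ over V and u* maximizes Δ over V, then Δ(v) ≥ ((1-ε)/(1+ε))·Δ(u*) - (2ε/(1+ε))·n. -/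
/-! Since `v` maximizes the estimate, `(1 - ε)(F + Δ u*) ≤ F̃ + Δ̃ u* ≤ F̃ + Δ̃ v ≤ (1 + ε)(F + Δ v)`;
solving this for `Δ v` costs `2εF ≤ 2εn`. -/

lemma div_mul_sub_div_mul_le_of_approx {ε F n a b : ℝ} (hε : 0 ≤ ε) (hF : F ≤ n)
    (h : (1 - ε) * (F + a) ≤ (1 + ε) * (F + b)) :
    (1 - ε) / (1 + ε) * a - 2 * ε / (1 + ε) * n ≤ b := by
  have hpos : 0 < 1 + ε := by linarith
  rw [div_mul_eq_mul_div, div_mul_eq_mul_div, ← sub_div, div_le_iff₀ hpos]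
  linarith [mul_le_mul_of_nonneg_left hF hε]

theorem stmt_8_general {ι : Type*} (V : Finset ι)
    (ε : ℝ) (hε0 : 0 ≤ ε)
    (n : ℝ) (F Ftil : ℝ) (hF : F ≤ n)
    (Δ Δtil : ι → ℝ)
    (happrox : ∀ u ∈ V, (1 - ε) * (F + Δ u) ≤ Ftil + Δtil u ∧
      Ftil + Δtil u ≤ (1 + ε) * (F + Δ u))
    (v : ι) (hv : v ∈ V) (hvmax : ∀ u ∈ V, Δtil u ≤ Δtil v)
    (ustar : ι) (hustar : ustar ∈ V) :
    Δ v ≥ ((1 - ε) / (1 + ε)) * Δ ustar - (2 * ε / (1 + ε)) * n := by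
  refine div_mul_sub_div_mul_le_of_approx hε0 hF ?_
  calc (1 - ε) * (F + Δ ustar) ≤ Ftil + Δtil ustar := (happrox ustar hustar).1
    _ ≤ Ftil + Δtil v := by linarith [hvmax ustar hustar]
    _ ≤ (1 + ε) * (F + Δ v) := (happrox v hv).2

theorem stmt_8 {ι : Type*} (V : Finset ι) (hV : V.Nonempty)
    (ε : ℝ) (hε0 : 0 ≤ ε) (hε1 : ε < 1) (α : ℝ) (hα0 : 0 < α) (hα1 : α ≤ 1)
    (n : ℝ) (hn : 0 ≤ n) (F Ftil : ℝ) (hF : F ≤ n)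
    (Δ Δtil : ι → ℝ) (hΔnn : ∀ u ∈ V, 0 ≤ Δ u)
    (happrox : ∀ u ∈ V, (1 - ε) * (F + Δ u) ≤ Ftil + Δtil u ∧
      Ftil + Δtil u ≤ (1 + ε) * (F + Δ u))
    (v : ι) (hv : v ∈ V) (hvmax : ∀ u ∈ V, Δtil u ≤ Δtil v)
    (ustar : ι) (hustar : ustar ∈ V) (hustarmax : ∀ u ∈ V, Δ u ≤ Δ ustar) :
    Δ v ≥ ((1 - ε) / (1 + ε)) * Δ ustar - (2 * ε / (1 + ε)) * n :=
  stmt_8_general V ε hε0 n F Ftil hF Δ Δtil happrox v hv hvmax ustar hustar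
end

section
/- Let B be a positive integer, α ∈ (0,1], ε ∈ [0,1), n ≥ 0, and f* ≥ 0. Suppose g₀ = 0 and g₀ ≤ g₁ ≤ ... ≤ g_B satisfy (α/(1+ε))·((f* - (1+ε)g_i/α) - (f* - (1+ε)g_{i+1}/α)) ≥ ((1-ε)/((1+ε)B))·(f* - (1+ε)g_i/α) - (2ε/(1+ε))·n for all 0 ≤ i < B, with (1-ε)/(αB) ≤ 1. Then g_B ≥ (α/(1+ε))·(1 - e^{-(1-ε)/α})·f* - (2ε/(1+ε))·n·B. -/
/-! With `d i = f* - (1 + ε) g i / α` (the scaled gap to the optimum) the hypothesis says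
`d (i+1) ≤ (1 - t/B) d i + 2εn/α` with `t = (1 - ε)/α`. Unrolling this affine recurrence
gives `d B ≤ (1 - t/B)^B f* + B · 2εn/α`, and `(1 - t/B)^B ≤ e^{-t}`. -/

open Real

theorem le_pow_mul_add_of_succ_le_mul_add {R : Type*} [CommRing R] [LinearOrder R]
    [IsStrictOrderedRing R] {d : ℕ → R} {a K : R} {B : ℕ} (ha0 : 0 ≤ a) (ha1 : a ≤ 1)
    (hK : 0 ≤ K) (hstep : ∀ i < B, d (i + 1) ≤ a * d i + K) :
    d B ≤ a ^ B * d 0 + B * K := by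
  suffices ∀ m ≤ B, d m ≤ a ^ m * d 0 + m * K from this B le_rfl
  intro m
  induction m with
  | zero => simp
  | succ m ih =>
    intro hm
    have hmK : a * (m * K) ≤ m * K := mul_le_of_le_one_left (by positivity) ha1
    calc d (m + 1) ≤ a * d m + K := hstep m hm
      _ ≤ a * (a ^ m * d 0 + m * K) + K := by gcongr; exact ih (by omega)
      _ ≤ a ^ (m + 1) * d 0 + (m + 1 : ℕ) * K := by push_cast; linear_combination hmK

theorem gap_succ_le_of_greedy_step {B : ℕ} {α ε n x y : ℝ} (hB : 0 < B) (hα : 0 < α)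
    (hε : 0 ≤ ε)
    (h : (α / (1 + ε)) * (x - y) ≥ ((1 - ε) / ((1 + ε) * B)) * x - (2 * ε / (1 + ε)) * n) :
    y ≤ (1 - (1 - ε) / α / B) * x + 2 * ε * n / α := by
  have hB' : (0 : ℝ) < B := Nat.cast_pos.mpr hB
  have hε' : 0 < 1 + ε := by linarith
  have key : (1 - ε) * x - 2 * ε * n * B ≤ α * B * (x - y) := by
    have := mul_le_mul_of_nonneg_left h hε'.le
    field_simp at this
    linarith
  rw [← sub_nonneg]
  have expand : (1 - (1 - ε) / α / B) * x + 2 * ε * n / α - y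
      = (α * B * (x - y) - ((1 - ε) * x - 2 * ε * n * B)) / (α * B) := by
    field_simp; ring
  rw [expand]
  exact div_nonneg (by linarith) (by positivity)

theorem stmt_10_general (B : ℕ) (hB : 0 < B) (α : ℝ) (hα0 : 0 < α)
    (ε : ℝ) (hε0 : 0 ≤ ε) (hε1 : ε < 1) (n fstar : ℝ) (hn : 0 ≤ n) (hf : 0 ≤ fstar)
    (g : ℕ → ℝ) (hg0 : g 0 = 0)
    (hrec : ∀ i < B,
      (α / (1 + ε)) * ((fstar - (1 + ε) * g i / α) - (fstar - (1 + ε) * g (i + 1) / α))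
        ≥ ((1 - ε) / ((1 + ε) * B)) * (fstar - (1 + ε) * g i / α) - (2 * ε / (1 + ε)) * n)
    (hx : (1 - ε) / (α * B) ≤ 1) :
    g B ≥ (α / (1 + ε)) * (1 - Real.exp (-(1 - ε) / α)) * fstar - (2 * ε / (1 + ε)) * n * B := by
  set t := (1 - ε) / α
  have hB' : (0 : ℝ) < B := Nat.cast_pos.mpr hB
  have ht : t ≤ B := by rwa [div_mul_eq_div_div, div_le_one hB'] at hx
  have hdB := le_pow_mul_add_of_succ_le_mul_add (d := fun i => fstar - (1 + ε) * g i / α)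
    (sub_nonneg.mpr (div_le_one_of_le₀ ht hB'.le)) (sub_le_self _ (by positivity))
    (by positivity) fun i hi => gap_succ_le_of_greedy_step hB hα0 hε0 (hrec i hi)
  have hexp : (1 - t / B) ^ B * fstar ≤ exp (-t) * fstar :=
    mul_le_mul_of_nonneg_right (one_sub_div_pow_le_exp_neg ht) hf
  simp only [hg0, mul_zero, zero_div, sub_zero] at hdB
  rw [neg_div, ge_iff_le, ← sub_nonneg]
  have expand : g B - ((α / (1 + ε)) * (1 - exp (-t)) * fstar - (2 * ε / (1 + ε)) * n * B)
      = (α / (1 + ε)) * ((exp (-t) * fstar + B * (2 * ε * n / α)) - (fstar - (1 + ε) * g B / α)) := by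
    field_simp; ring
  rw [expand]
  exact mul_nonneg (by positivity) (by linarith)

theorem stmt_10 (B : ℕ) (hB : 0 < B) (α : ℝ) (hα0 : 0 < α) (hα1 : α ≤ 1)
    (ε : ℝ) (hε0 : 0 ≤ ε) (hε1 : ε < 1) (n fstar : ℝ) (hn : 0 ≤ n) (hf : 0 ≤ fstar)
    (g : ℕ → ℝ) (hg0 : g 0 = 0) (hnn : ∀ i ≤ B, 0 ≤ g i)
    (hmono : ∀ i, i < B → g i ≤ g (i + 1))
    (hrec : ∀ i < B,
      (α / (1 + ε)) * ((fstar - (1 + ε) * g i / α) - (fstar - (1 + ε) * g (i + 1) / α))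
        ≥ ((1 - ε) / ((1 + ε) * B)) * (fstar - (1 + ε) * g i / α) - (2 * ε / (1 + ε)) * n)
    (hx : (1 - ε) / (α * B) ≤ 1) :
    g B ≥ (α / (1 + ε)) * (1 - Real.exp (-(1 - ε) / α)) * fstar - (2 * ε / (1 + ε)) * n * B :=
  stmt_10_general B hB α hα0 ε hε0 hε1 n fstar hn hf g hg0 hrec hx
end
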